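/- Let Γ₁ ⊇ Γ₂ ⊇ ⋯ be a nested sequence of lattices in H₃(ℝ) (then each Γ_{n+1} has finite index in Γ_n). For each n, fix a finite set R_n ⊆ Γ_n mapping bijectively onto the coset space Γ_n/Γ_{n+1}, and equip Ω := Π_{n≥1} R_n with the product of the uniform probability measures. Then the following are equivalent: (a) {c(t) : t ∈ ℝ} ∩ ⋂_{n≥1} Γ_n = {1}; (b) for almost every sequence (γ_n)_{n≥1} ∈ Ω one has ⋂_{n≥1} γ₁⋯γ_{n−1} Γ_n γ_{n−1}⁻¹⋯γ₁⁻¹ = {1} (the product γ₁⋯γ_{n−1} is empty for n = 1). In particular the validity of (b) does not depend on the choice of the representative sets R_n. (This equivalence expresses that the Heisenberg odometer associated with (Γ_n) is essentially free if and only if its restriction to the center of H₃(ℝ) is free.) -/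

import Mathlib

open MeasureTheory

/-- The real Heisenberg group `H₃(ℝ)`: `ℝ³` with
`(a,b,c)·(a′,b′,c′) = (a+a′, b+b′, c+c′+a·b′)`. -/
@[ext] structure H3 : Type where
  x : ℝ
  y : ℝ
  z : ℝ

namespace H3

instance : Mul H3 := ⟨fun g h => ⟨g.x + h.x, g.y + h.y, g.z + h.z + g.x * h.y⟩⟩
instance : One H3 := ⟨⟨0, 0, 0⟩⟩
instance : Inv H3 := ⟨fun g => ⟨-g.x, -g.y, -g.z + g.x * g.y⟩⟩

@[simp] lemma mul_x (g h : H3) : (g * h).x = g.x + h.x := rfl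
@[simp] lemma mul_y (g h : H3) : (g * h).y = g.y + h.y := rfl
@[simp] lemma mul_z (g h : H3) : (g * h).z = g.z + h.z + g.x * h.y := rfl
@[simp] lemma one_x : (1 : H3).x = 0 := rfl
@[simp] lemma one_y : (1 : H3).y = 0 := rfl
@[simp] lemma one_z : (1 : H3).z = 0 := rfl
@[simp] lemma inv_x (g : H3) : g⁻¹.x = -g.x := rfl
@[simp] lemma inv_y (g : H3) : g⁻¹.y = -g.y := rfl
@[simp] lemma inv_z (g : H3) : g⁻¹.z = -g.z + g.x * g.y := rfl

instance : Group H3 where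
  mul_assoc a b c := by ext <;> simp <;> ring
  one_mul a := by ext <;> simp
  mul_one a := by ext <;> simp
  inv_mul_cancel a := by ext <;> simp

/-- The Euclidean topology on `H₃(ℝ)`. -/
instance : TopologicalSpace H3 :=
  TopologicalSpace.induced (fun g => (g.x, g.y, g.z)) inferInstance

instance : MeasurableSpace H3 := borel H3

/-- `a(t)`. -/
def Ha (t : ℝ) : H3 := ⟨t, 0, 0⟩
/-- `b(t)`. -/
def Hb (t : ℝ) : H3 := ⟨0, t, 0⟩
/-- `c(t)`, the center. -/
def Hc (t : ℝ) : H3 := ⟨0, 0, t⟩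

/-- The projection `p : H₃(ℝ) → ℝ²`. -/
def pmap (g : H3) : ℝ × ℝ := (g.x, g.y)

/-- The kernel of `p`, i.e. the center of `H₃(ℝ)`, as a subgroup. -/
def pKer : Subgroup H3 where
  carrier := {g | g.x = 0 ∧ g.y = 0}
  one_mem' := ⟨rfl, rfl⟩
  mul_mem' := by
    rintro a b ⟨ha1, ha2⟩ ⟨hb1, hb2⟩
    exact ⟨by simp [ha1, hb1], by simp [ha2, hb2]⟩
  inv_mem' := by
    rintro a ⟨ha1, ha2⟩
    exact ⟨by simp [ha1], by simp [ha2]⟩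

/-- A lattice in `H₃(ℝ)`: a discrete subgroup with compact quotient. -/
def IsLattice (Γ : Subgroup H3) : Prop :=
  DiscreteTopology Γ ∧ CompactSpace (H3 ⧸ Γ)

/-- `k_Γ`: the index of the commutator subgroup `[Γ,Γ]` in `Γ ∩ ker p`. -/
noncomputable def kIdx (Γ : Subgroup H3) : ℕ :=
  Subgroup.relIndex ⁅Γ, Γ⁆ (Γ ⊓ pKer)

/-- The integer lattice `ℤ² ⊆ ℝ²`. -/
def intLattice : Set (ℝ × ℝ) := {v | ∃ m n : ℤ, v = ((m : ℝ), (n : ℝ))}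

/-- The action of a `2×2` matrix on `ℝ²`. -/
def matVec (A : Matrix (Fin 2) (Fin 2) ℝ) (v : ℝ × ℝ) : ℝ × ℝ :=
  (A 0 0 * v.1 + A 0 1 * v.2, A 1 0 * v.1 + A 1 1 * v.2)

/-- The dual of a subset of `ℝ²`:
all vectors pairing integrally with every element of `S`. -/
def dualSet (S : Set (ℝ × ℝ)) : Set (ℝ × ℝ) :=
  {v | ∀ w ∈ S, ∃ n : ℤ, v.1 * w.1 + v.2 * w.2 = (n : ℝ)}

end H3

open H3

/-- Partial products `pprodSeq γ n = γ 0 * ⋯ * γ (n-1)` (empty product for `n = 0`). -/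
def pprodSeq (γ : ℕ → H3) : ℕ → H3
  | 0 => 1
  | n + 1 => pprodSeq γ n * γ n

namespace HOdo
open H3

/-- The pairing `φ_h(u) = u.x·h.y − u.y·h.x`. -/
def phi (h u : H3) : ℝ := u.x * h.y - u.y * h.x

@[simp] lemma Hc_x (t : ℝ) : (Hc t).x = 0 := rfl
@[simp] lemma Hc_y (t : ℝ) : (Hc t).y = 0 := rfl
@[simp] lemma Hc_z (t : ℝ) : (Hc t).z = t := rfl

lemma Hc_zero : Hc 0 = 1 := by ext <;> simp [Hc]

lemma Hc_inv (t : ℝ) : (Hc t)⁻¹ = Hc (-t) := by ext <;> simp [Hc]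

lemma Hc_comm (t : ℝ) (g : H3) : g * Hc t = Hc t * g := by ext <;> simp <;> ring

lemma phi_mul (h u v : H3) : phi h (u * v) = phi h u + phi h v := by
  simp only [phi, mul_x, mul_y]; ring

lemma phi_conj (h g c : H3) : phi h (g⁻¹ * c * g) = phi h c := by
  simp only [phi, mul_x, mul_y, inv_x, inv_y]; ring

lemma phi_pow (h γ : H3) (m : ℕ) : phi h (γ ^ m) = m * phi h γ := by
  induction m with
  | zero => simp [phi]
  | succ k ih => rw [pow_succ, phi_mul, ih]; push_cast; ring

/-- Key commutator identity. -/
lemma conj_div (h a b : H3) :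
    (a⁻¹ * h * a)⁻¹ * (b⁻¹ * h * b) = Hc (-(phi h (a⁻¹ * b))) := by
  ext <;> simp [Hc, phi] <;> ring

lemma central_conj (t : ℝ) (g : H3) : g * Hc t * g⁻¹ = Hc t := by
  rw [Hc_comm]; group

end HOdo
namespace HOdo
open H3

section Reps

variable {Γ : ℕ → Subgroup H3} {R : ℕ → Type} [∀ n, Fintype (R n)]
  {ρ : ∀ n, R n → H3}

lemma pprod_congr {f g : ℕ → H3} {n : ℕ} (h : ∀ i < n, f i = g i) :
    pprodSeq f n = pprodSeq g n := by
  induction n with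
  | zero => rfl
  | succ k ih =>
      show pprodSeq f k * f k = pprodSeq g k * g k
      rw [ih fun i hi => h i (Nat.lt_succ_of_lt hi), h k (Nat.lt_succ_self k)]

lemma gam_le (hnest : ∀ n, Γ (n + 1) ≤ Γ n) {m n : ℕ} (h : m ≤ n) : Γ n ≤ Γ m := by
  induction h with
  | refl => exact le_rfl
  | step _ ih => exact le_trans (hnest _) ih

lemma prod_mem (hnest : ∀ n, Γ (n + 1) ≤ Γ n) (hmem : ∀ n (r : R n), ρ n r ∈ Γ n)
    (ω : ∀ i, R i) (n : ℕ) : pprodSeq (fun i => ρ i (ω i)) n ∈ Γ 0 := by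
  induction n with
  | zero => exact one_mem _
  | succ k ih => exact mul_mem ih (gam_le hnest (Nat.zero_le k) (hmem k (ω k)))

lemma rep_ex (hnest : ∀ n, Γ (n + 1) ≤ Γ n)
    (hrep : ∀ n, ∀ γ ∈ Γ n, ∃! r : R n, (ρ n r)⁻¹ * γ ∈ Γ (n + 1))
    [Nonempty (∀ i, R i)] (n : ℕ) {γ : H3} (hγ : γ ∈ Γ 0) :
    ∃ ω : ∀ i, R i, (pprodSeq (fun i => ρ i (ω i)) n)⁻¹ * γ ∈ Γ n := by
  induction n with
  | zero =>
      obtain ⟨ω⟩ := ‹Nonempty (∀ i, R i)›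
      exact ⟨ω, by simpa [pprodSeq] using hγ⟩
  | succ k ih =>
      obtain ⟨ω, hω⟩ := ih
      obtain ⟨r, hr, -⟩ := hrep k _ hω
      refine ⟨Function.update ω k r, ?_⟩
      have hlt : ∀ i < k, (fun i => ρ i (Function.update ω k r i)) i =
          (fun i => ρ i (ω i)) i := by
        intro i hi
        simp [Function.update_of_ne (Nat.ne_of_lt hi)]
      show (pprodSeq (fun i => ρ i (Function.update ω k r i)) k *
          ρ k (Function.update ω k r k))⁻¹ * γ ∈ Γ (k + 1)
      rw [pprod_congr hlt, Function.update_self]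
      have : (pprodSeq (fun i => ρ i (ω i)) k * ρ k r)⁻¹ * γ =
          (ρ k r)⁻¹ * ((pprodSeq (fun i => ρ i (ω i)) k)⁻¹ * γ) := by group
      rw [this]
      exact hr

lemma rep_un (hnest : ∀ n, Γ (n + 1) ≤ Γ n) (hmem : ∀ n (r : R n), ρ n r ∈ Γ n)
    (hrep : ∀ n, ∀ γ ∈ Γ n, ∃! r : R n, (ρ n r)⁻¹ * γ ∈ Γ (n + 1))
    (n : ℕ) {γ : H3} {ω ω' : ∀ i, R i}
    (h1 : (pprodSeq (fun i => ρ i (ω i)) n)⁻¹ * γ ∈ Γ n)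
    (h2 : (pprodSeq (fun i => ρ i (ω' i)) n)⁻¹ * γ ∈ Γ n) :
    ∀ i < n, ω i = ω' i := by
  induction n with
  | zero => intro i hi; omega
  | succ k ih =>
      have e1 : (pprodSeq (fun i => ρ i (ω i)) k)⁻¹ * γ =
          ρ k (ω k) * ((pprodSeq (fun i => ρ i (ω i)) (k+1))⁻¹ * γ) := by
        show _ = ρ k (ω k) * ((pprodSeq (fun i => ρ i (ω i)) k * ρ k (ω k))⁻¹ * γ)
        group
      have e2 : (pprodSeq (fun i => ρ i (ω' i)) k)⁻¹ * γ =
          ρ k (ω' k) * ((pprodSeq (fun i => ρ i (ω' i)) (k+1))⁻¹ * γ) := by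
        show _ = ρ k (ω' k) * ((pprodSeq (fun i => ρ i (ω' i)) k * ρ k (ω' k))⁻¹ * γ)
        group
      have g1 : (pprodSeq (fun i => ρ i (ω i)) k)⁻¹ * γ ∈ Γ k := by
        rw [e1]; exact mul_mem (hmem k (ω k)) (hnest k h1)
      have g2 : (pprodSeq (fun i => ρ i (ω' i)) k)⁻¹ * γ ∈ Γ k := by
        rw [e2]; exact mul_mem (hmem k (ω' k)) (hnest k h2)
      have hik := ih g1 g2
      have hpeq : pprodSeq (fun i => ρ i (ω i)) k = pprodSeq (fun i => ρ i (ω' i)) k :=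
        pprod_congr fun i hi => by rw [hik i hi]
      have hk : ω k = ω' k := by
        obtain ⟨r, -, hru⟩ := hrep k _ g1
        have hA : (ρ k (ω k))⁻¹ * ((pprodSeq (fun i => ρ i (ω i)) k)⁻¹ * γ) ∈ Γ (k+1) := by
          have : (ρ k (ω k))⁻¹ * ((pprodSeq (fun i => ρ i (ω i)) k)⁻¹ * γ) =
              (pprodSeq (fun i => ρ i (ω i)) k * ρ k (ω k))⁻¹ * γ := by group
          rw [this]; exact h1
        have hB : (ρ k (ω' k))⁻¹ * ((pprodSeq (fun i => ρ i (ω i)) k)⁻¹ * γ) ∈ Γ (k+1) := by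
          have : (ρ k (ω' k))⁻¹ * ((pprodSeq (fun i => ρ i (ω i)) k)⁻¹ * γ) =
              (pprodSeq (fun i => ρ i (ω' i)) k * ρ k (ω' k))⁻¹ * γ := by
            rw [hpeq]; group
          rw [this]; exact h2
        rw [hru (ω k) hA, hru (ω' k) hB]
      intro i hi
      rcases Nat.lt_succ_iff_lt_or_eq.mp hi with hik' | hieq
      · exact hik i hik'
      · subst hieq; exact hk

end Reps
end HOdo
namespace HOdo
open H3

section Count

variable {Γ : ℕ → Subgroup H3} {R : ℕ → Type} [∀ n, Fintype (R n)]
  {ρ : ∀ n, R n → H3}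

/-- Extension of a finite tuple to a full sequence of representatives. -/
def extFn {R : ℕ → Type} (f₀ : ∀ i, R i) (n : ℕ) (v : ∀ i : Fin n, R i) : ∀ i, R i :=
  fun i => if h : i < n then v ⟨i, h⟩ else f₀ i

/-- The group element associated with a finite tuple of representatives. -/
def gv (ρ : ∀ n, R n → H3) (f₀ : ∀ i, R i) (n : ℕ) (v : ∀ i : Fin n, R i) : H3 :=
  pprodSeq (fun i => ρ i (extFn f₀ n v i)) n

lemma gv_eq_prod (f₀ ω : ∀ i, R i) (n : ℕ) :
    gv ρ f₀ n (fun i : Fin n => ω i) = pprodSeq (fun i => ρ i (ω i)) n := by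
  refine pprod_congr fun i hi => ?_
  simp [extFn, hi]

lemma gv_inj (hnest : ∀ n, Γ (n + 1) ≤ Γ n) (hmem : ∀ n (r : R n), ρ n r ∈ Γ n)
    (hrep : ∀ n, ∀ γ ∈ Γ n, ∃! r : R n, (ρ n r)⁻¹ * γ ∈ Γ (n + 1))
    (f₀ : ∀ i, R i) (n : ℕ) {γ : H3} {v v' : ∀ i : Fin n, R i}
    (h1 : (gv ρ f₀ n v)⁻¹ * γ ∈ Γ n) (h2 : (gv ρ f₀ n v')⁻¹ * γ ∈ Γ n) : v = v' := by
  have := rep_un (Γ := Γ) hnest hmem hrep n h1 h2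
  funext i
  have hi := this i i.isLt
  simpa [extFn, i.isLt] using hi

lemma gv_mem (hnest : ∀ n, Γ (n + 1) ≤ Γ n) (hmem : ∀ n (r : R n), ρ n r ∈ Γ n)
    (f₀ : ∀ i, R i) (n : ℕ) (v : ∀ i : Fin n, R i) : gv ρ f₀ n v ∈ Γ 0 :=
  prod_mem hnest hmem _ n

open Finset in
open scoped Classical in
/-- Core counting bound: if `w j`, `j < M`, lie in pairwise distinct cosets of
`D_n = φ_h⁻¹(S_n)`, then the proportion of good tuples is at most `1/M`. -/
lemma key_bound (hnest : ∀ n, Γ (n + 1) ≤ Γ n) (hmem : ∀ n (r : R n), ρ n r ∈ Γ n)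
    (hrep : ∀ n, ∀ γ ∈ Γ n, ∃! r : R n, (ρ n r)⁻¹ * γ ∈ Γ (n + 1))
    (f₀ : ∀ i, R i) (n : ℕ) (h : H3) (M : ℕ) (w : Fin M → H3)
    (hw : ∀ j, w j ∈ Γ 0)
    (hdisj : ∀ i j : Fin M, i ≠ j → Hc (phi h ((w i)⁻¹ * w j)) ∉ Γ n) :
    M * (Finset.univ.filter (fun v : ∀ i : Fin n, R i =>
        (gv ρ f₀ n v)⁻¹ * h * gv ρ f₀ n v ∈ Γ n)).card
      ≤ Fintype.card (∀ i : Fin n, R i) := by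
  classical
  haveI : Nonempty (∀ i, R i) := ⟨f₀⟩
  set G := gv ρ f₀ n with hG
  set good : Finset (∀ i : Fin n, R i) :=
    Finset.univ.filter (fun v => (G v)⁻¹ * h * G v ∈ Γ n) with hgood
  set B : Fin M → Finset (∀ i : Fin n, R i) := fun j =>
    Finset.univ.filter (fun v => (w j * G v)⁻¹ * h * (w j * G v) ∈ Γ n) with hB
  -- pairwise disjointness of the B j
  have hBdisj : ∀ i j : Fin M, i ≠ j → Disjoint (B i) (B j) := by
    intro i j hij
    rw [Finset.disjoint_left]
    intro v hvi hvj
    have h1 : (w i * G v)⁻¹ * h * (w i * G v) ∈ Γ n := by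
      simpa [hB] using hvi
    have h2 : (w j * G v)⁻¹ * h * (w j * G v) ∈ Γ n := by
      simpa [hB] using hvj
    have key : ((w i * G v)⁻¹ * h * (w i * G v))⁻¹ * ((w j * G v)⁻¹ * h * (w j * G v)) =
        Hc (-(phi h ((w i)⁻¹ * w j))) := by
      rw [conj_div]
      congr 1
      have e : (w i * G v)⁻¹ * (w j * G v) = (G v)⁻¹ * ((w i)⁻¹ * w j) * G v := by group
      rw [e, phi_conj]
    have hm : Hc (-(phi h ((w i)⁻¹ * w j))) ∈ Γ n := by
      rw [← key]; exact mul_mem (inv_mem h1) h2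
    have : Hc (phi h ((w i)⁻¹ * w j)) ∈ Γ n := by
      have := inv_mem hm
      rwa [Hc_inv, neg_neg] at this
    exact hdisj i j hij this
  -- each B j has at least as many elements as good
  have hcard : ∀ j : Fin M, good.card ≤ (B j).card := by
    intro j
    -- map: v' good ↦ the tuple representing (w j)⁻¹ * G v'
    have hsel : ∀ v' : ∀ i : Fin n, R i, ∃ ω : ∀ i, R i,
        (pprodSeq (fun i => ρ i (ω i)) n)⁻¹ * ((w j)⁻¹ * G v') ∈ Γ n := fun v' =>
      rep_ex hnest hrep n (mul_mem (inv_mem (hw j)) (gv_mem hnest hmem f₀ n v'))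
    choose sel hsel' using hsel
    set F : (∀ i : Fin n, R i) → (∀ i : Fin n, R i) :=
      fun v' => fun i : Fin n => sel v' i with hF
    have hFspec : ∀ v', (G (F v'))⁻¹ * ((w j)⁻¹ * G v') ∈ Γ n := by
      intro v'
      have := hsel' v'
      rwa [hG, ← gv_eq_prod f₀ (sel v') n] at this
    refine Finset.card_le_card_of_injOn F ?_ ?_
    · intro v' hv'
      have hgd : (G v')⁻¹ * h * G v' ∈ Γ n := by simpa [hgood] using hv'
      set δ := (G (F v'))⁻¹ * ((w j)⁻¹ * G v') with hδ
      have hδm : δ ∈ Γ n := hFspec v'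
      have e : w j * G (F v') = G v' * δ⁻¹ := by rw [hδ]; group
      have : (w j * G (F v'))⁻¹ * h * (w j * G (F v')) =
          δ * ((G v')⁻¹ * h * G v') * δ⁻¹ := by rw [e]; group
      simp only [hB, Finset.mem_coe, Finset.mem_filter, Finset.mem_univ, true_and]
      rw [this]
      exact mul_mem (mul_mem hδm hgd) (inv_mem hδm)
    · intro v₁ hv₁ v₂ hv₂ hFeq
      have d1 := hFspec v₁
      have d2 := hFspec v₂
      rw [hFeq] at d1
      -- (G v₁)⁻¹ * (G v₂) ∈ Γ n
      have hmem12 : (G v₁)⁻¹ * G v₂ ∈ Γ n := by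
        have : (G v₁)⁻¹ * G v₂ =
            ((G (F v₂))⁻¹ * ((w j)⁻¹ * G v₁))⁻¹ * ((G (F v₂))⁻¹ * ((w j)⁻¹ * G v₂)) := by
          group
        rw [this]
        exact mul_mem (inv_mem d1) d2
      exact gv_inj hnest hmem hrep f₀ n (γ := G v₂) hmem12 (by simpa [hG] using one_mem (Γ n))
  -- sum up
  have hsum : ∑ j : Fin M, (B j).card ≤ Fintype.card (∀ i : Fin n, R i) := by
    classical
    rw [← Finset.card_biUnion (fun i _ j _ hij => hBdisj i j hij)]
    exact (Finset.card_le_card (Finset.subset_univ _)).trans_eq (Finset.card_univ)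
  calc M * good.card = ∑ _j : Fin M, good.card := by
        simp [Finset.sum_const, Finset.card_univ]
    _ ≤ ∑ j : Fin M, (B j).card := Finset.sum_le_sum fun j _ => hcard j
    _ ≤ _ := hsum

end Count
end HOdo
namespace HOdo
open H3 MeasureTheory

lemma ennreal_frac_le {g M N : ℕ} (hN : 0 < N) (h : M * g ≤ N) :
    (g : ENNReal) * ((N : ENNReal))⁻¹ ≤ ((M : ENNReal))⁻¹ := by
  rw [ENNReal.le_inv_iff_mul_le]
  have e : (g : ENNReal) * ((N : ENNReal))⁻¹ * (M : ENNReal) =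
      ((M * g : ℕ) : ENNReal) * ((N : ENNReal))⁻¹ := by push_cast; ring
  rw [e]
  calc ((M * g : ℕ) : ENNReal) * ((N : ENNReal))⁻¹
      ≤ (N : ENNReal) * ((N : ENNReal))⁻¹ := by
        exact mul_le_mul_left (by exact_mod_cast h) _
    _ = 1 := ENNReal.mul_inv_cancel (by exact_mod_cast hN.ne') (by simp)

section Meas

variable {Γ : ℕ → Subgroup H3} {R : ℕ → Type} [∀ n, Fintype (R n)]
  [∀ n, MeasurableSpace (R n)] [∀ n, DiscreteMeasurableSpace (R n)]
  {ρ : ∀ n, R n → H3}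

open scoped Classical in
lemma meas_le (μ : Measure (∀ n, R n))
    (hcyl : ∀ (n : ℕ) (f : ∀ i, R i),
      μ {ω | ∀ i < n, ω i = f i} =
        ∏ i ∈ Finset.range n, ((Fintype.card (R i) : ENNReal))⁻¹)
    (f₀ : ∀ i, R i) (n : ℕ) (h : H3) :
    μ {ω : ∀ i, R i | (pprodSeq (fun i => ρ i (ω i)) n)⁻¹ * h *
        pprodSeq (fun i => ρ i (ω i)) n ∈ Γ n}
      ≤ ((Finset.univ.filter (fun v : ∀ i : Fin n, R i =>
          (gv ρ f₀ n v)⁻¹ * h * gv ρ f₀ n v ∈ Γ n)).card : ENNReal) *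
        ∏ i ∈ Finset.range n, ((Fintype.card (R i) : ENNReal))⁻¹ := by
  set good : Finset (∀ i : Fin n, R i) :=
    Finset.univ.filter (fun v => (gv ρ f₀ n v)⁻¹ * h * gv ρ f₀ n v ∈ Γ n) with hgood
  have hsub : {ω : ∀ i, R i | (pprodSeq (fun i => ρ i (ω i)) n)⁻¹ * h *
        pprodSeq (fun i => ρ i (ω i)) n ∈ Γ n} ⊆
      ⋃ v ∈ good, {ω : ∀ i, R i | ∀ i < n, ω i = extFn f₀ n v i} := by
    intro ω hω
    have hv : (fun i : Fin n => ω i) ∈ good := by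
      simp only [hgood, Finset.mem_filter, Finset.mem_univ, true_and]
      rw [gv_eq_prod]
      exact hω
    refine Set.mem_biUnion hv ?_
    intro i hi
    simp [extFn, hi]
  calc μ _ ≤ μ (⋃ v ∈ good, {ω : ∀ i, R i | ∀ i < n, ω i = extFn f₀ n v i}) :=
        measure_mono hsub
    _ ≤ ∑ v ∈ good, μ {ω : ∀ i, R i | ∀ i < n, ω i = extFn f₀ n v i} :=
        measure_biUnion_finset_le good _
    _ = ∑ _v ∈ good, ∏ i ∈ Finset.range n, ((Fintype.card (R i) : ENNReal))⁻¹ :=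
        Finset.sum_congr rfl fun v _ => hcyl n (extFn f₀ n v)
    _ = _ := by rw [Finset.sum_const, nsmul_eq_mul]

open scoped Classical in
/-- Combined bound: with `M` pairwise-inequivalent translates, the event at stage `n`
has measure at most `1/M`. -/
lemma meas_stage_le (hnest : ∀ n, Γ (n + 1) ≤ Γ n) (hmem : ∀ n (r : R n), ρ n r ∈ Γ n)
    (hrep : ∀ n, ∀ γ ∈ Γ n, ∃! r : R n, (ρ n r)⁻¹ * γ ∈ Γ (n + 1))
    (μ : Measure (∀ n, R n))
    (hcyl : ∀ (n : ℕ) (f : ∀ i, R i),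
      μ {ω | ∀ i < n, ω i = f i} =
        ∏ i ∈ Finset.range n, ((Fintype.card (R i) : ENNReal))⁻¹)
    (f₀ : ∀ i, R i) (n : ℕ) (h : H3) (M : ℕ) (w : Fin M → H3)
    (hw : ∀ j, w j ∈ Γ 0)
    (hdisj : ∀ i j : Fin M, i ≠ j → Hc (phi h ((w i)⁻¹ * w j)) ∉ Γ n) :
    μ {ω : ∀ i, R i | (pprodSeq (fun i => ρ i (ω i)) n)⁻¹ * h *
        pprodSeq (fun i => ρ i (ω i)) n ∈ Γ n} ≤ ((M : ENNReal))⁻¹ := by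
  refine (meas_le (Γ := Γ) μ hcyl f₀ n h).trans ?_
  have hkey := key_bound hnest hmem hrep f₀ n h M w hw hdisj
  haveI : ∀ i : ℕ, Nonempty (R i) := fun i => ⟨f₀ i⟩
  have hNpos : 0 < Fintype.card (∀ i : Fin n, R i) := Fintype.card_pos
  have hprod : ∏ i ∈ Finset.range n, ((Fintype.card (R i) : ENNReal))⁻¹ =
      ((Fintype.card (∀ i : Fin n, R i) : ENNReal))⁻¹ := by
    rw [Fintype.card_pi, ← Fin.prod_univ_eq_prod_range (fun i => ((Fintype.card (R i) : ENNReal))⁻¹)]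
    rw [← ENNReal.prod_inv_distrib (by intro i _ j _ _; left; exact Nat.cast_ne_zero.mpr Fintype.card_ne_zero)]
    push_cast
    rfl
  rw [hprod]
  exact ennreal_frac_le hNpos hkey

end Meas
end HOdo
namespace HOdo
open H3

lemma h3_secondCountable : SecondCountableTopology H3 :=
  TopologicalSpace.secondCountableTopology_induced H3 (ℝ × ℝ × ℝ) (fun g => (g.x, g.y, g.z))

lemma subgroup_countable (Γ0 : Subgroup H3) (hd : DiscreteTopology Γ0) :
    Countable Γ0 := by
  haveI := h3_secondCountable
  haveI : SecondCountableTopology Γ0 :=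
    TopologicalSpace.secondCountableTopology_induced Γ0 H3 Subtype.val
  exact TopologicalSpace.separableSpace_iff_countable.mp inferInstance

lemma continuous_x : Continuous fun g : H3 => g.x :=
  (continuous_fst.comp (continuous_induced_dom (α := H3)))

lemma continuous_y : Continuous fun g : H3 => g.y :=
  ((continuous_fst.comp continuous_snd).comp (continuous_induced_dom (α := H3)))

/-- Cocompactness: the projection of a cocompact subgroup cannot lie in a line. -/
lemma exists_phi_ne (Γ0 : Subgroup H3) (hc : CompactSpace (H3 ⧸ Γ0))
    (x y : ℝ) (hxy : ¬(x = 0 ∧ y = 0)) :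
    ∃ γ ∈ Γ0, γ.x * y - γ.y * x ≠ 0 := by
  by_contra hcon
  push_neg at hcon
  set f : H3 → ℝ := fun g => g.x * y - g.y * x with hf
  have hfmul : ∀ a b : H3, f (a * b) = f a + f b := by
    intro a b; simp only [hf, mul_x, mul_y]; ring
  have hfc : Continuous f := ((continuous_x.mul continuous_const).sub
    (continuous_y.mul continuous_const))
  letI st : Setoid H3 := QuotientGroup.leftRel Γ0
  have hresp : ∀ a b : H3, a ≈ b → f a = f b := by
    intro a b hab
    have hab' : a⁻¹ * b ∈ Γ0 := QuotientGroup.leftRel_apply.mp hab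
    have : f b = f a + f (a⁻¹ * b) := by
      rw [← hfmul]; congr 1; group
    have h0 : f (a⁻¹ * b) = 0 := hcon _ hab'
    rw [this, h0, add_zero]
  set F : H3 ⧸ Γ0 → ℝ := Quotient.lift f hresp with hF
  have hFc : Continuous F := hfc.quotient_lift hresp
  have hd : x ^ 2 + y ^ 2 ≠ 0 := by
    intro h0
    have hx : x = 0 := by nlinarith [sq_nonneg x, sq_nonneg y]
    have hy : y = 0 := by nlinarith [sq_nonneg x, sq_nonneg y]
    exact hxy ⟨hx, hy⟩
  have hFs : Function.Surjective F := by
    intro r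
    refine ⟨QuotientGroup.mk ⟨y * r / (x ^ 2 + y ^ 2), -(x * r) / (x ^ 2 + y ^ 2), 0⟩, ?_⟩
    show f _ = r
    simp only [hf]
    field_simp
    ring
  have hcomp : IsCompact (Set.univ : Set ℝ) := by
    have := CompactSpace.isCompact_univ (X := H3 ⧸ Γ0)
    have himg : IsCompact (F '' Set.univ) := this.image hFc
    rwa [Set.image_univ, Set.range_eq_univ.mpr hFs] at himg
  exact noncompact_univ ℝ hcomp

end HOdo
namespace HOdo
open H3 MeasureTheory

lemma phi_inv (h u : H3) : phi h u⁻¹ = -phi h u := by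
  simp only [phi, inv_x, inv_y]; ring

section Null

variable {Γ : ℕ → Subgroup H3} {R : ℕ → Type} [∀ n, Fintype (R n)]
  [∀ n, MeasurableSpace (R n)] [∀ n, DiscreteMeasurableSpace (R n)]
  {ρ : ∀ n, R n → H3}

lemma T_null_noncentral (hlat0 : CompactSpace (H3 ⧸ Γ 0))
    (hnest : ∀ n, Γ (n + 1) ≤ Γ n) (hmem : ∀ n (r : R n), ρ n r ∈ Γ n)
    (hrep : ∀ n, ∀ γ ∈ Γ n, ∃! r : R n, (ρ n r)⁻¹ * γ ∈ Γ (n + 1))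
    (μ : Measure (∀ n, R n))
    (hcyl : ∀ (n : ℕ) (f : ∀ i, R i),
      μ {ω | ∀ i < n, ω i = f i} =
        ∏ i ∈ Finset.range n, ((Fintype.card (R i) : ENNReal))⁻¹)
    (f₀ : ∀ i, R i)
    (hcenter : ∀ t : ℝ, (∀ n, Hc t ∈ Γ n) → t = 0)
    (h : H3) (hh : ¬(h.x = 0 ∧ h.y = 0)) :
    μ (⋂ n, {ω : ∀ i, R i | (pprodSeq (fun i => ρ i (ω i)) n)⁻¹ * h *
        pprodSeq (fun i => ρ i (ω i)) n ∈ Γ n}) = 0 := by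
  obtain ⟨γ₀, hγ₀mem, hγ₀⟩ := exists_phi_ne (Γ 0) hlat0 h.x h.y hh
  have ht : phi h γ₀ ≠ 0 := hγ₀
  have key : ∀ M : ℕ, μ (⋂ n, {ω : ∀ i, R i | (pprodSeq (fun i => ρ i (ω i)) n)⁻¹ * h *
      pprodSeq (fun i => ρ i (ω i)) n ∈ Γ n}) ≤ ((M : ENNReal))⁻¹ := by
    intro M
    have hlev : ∀ p : Fin M × Fin M, ∃ n, p.1 ≠ p.2 →
        Hc (phi h ((γ₀ ^ (p.1 : ℕ))⁻¹ * γ₀ ^ (p.2 : ℕ))) ∉ Γ n := by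
      intro p
      by_cases hp : p.1 = p.2
      · exact ⟨0, fun hc => absurd hp hc⟩
      · have hval : phi h ((γ₀ ^ ((p.1 : Fin M) : ℕ))⁻¹ * γ₀ ^ ((p.2 : Fin M) : ℕ)) =
            (((p.2 : Fin M) : ℕ) : ℝ) * phi h γ₀ - (((p.1 : Fin M) : ℕ) : ℝ) * phi h γ₀ := by
          rw [phi_mul, phi_inv, phi_pow, phi_pow]; ring
        have hvne : phi h ((γ₀ ^ ((p.1 : Fin M) : ℕ))⁻¹ * γ₀ ^ ((p.2 : Fin M) : ℕ)) ≠ 0 := by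
          rw [hval]
          have : (((p.2 : Fin M) : ℕ) : ℝ) ≠ (((p.1 : Fin M) : ℕ) : ℝ) := by
            exact_mod_cast fun hc => hp (Fin.ext (by exact_mod_cast hc.symm))
          intro hc
          apply this
          have := sub_eq_zero.mp hc
          rcases mul_right_cancel₀ ht (by linarith [this] : (((p.2 : Fin M) : ℕ) : ℝ) * phi h γ₀ = (((p.1 : Fin M) : ℕ) : ℝ) * phi h γ₀) with h'
          · rw [h']
        by_contra hcon
        push_neg at hcon
        exact hvne (hcenter _ (fun n => (hcon n).2))
    choose N hN using hlev
    set n := (Finset.univ : Finset (Fin M × Fin M)).sup N with hn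
    have hdisj : ∀ i j : Fin M, i ≠ j →
        Hc (phi h ((γ₀ ^ (i : ℕ))⁻¹ * γ₀ ^ (j : ℕ))) ∉ Γ n := by
      intro i j hij hmemn
      have hle : N (i, j) ≤ n := Finset.le_sup (Finset.mem_univ (i, j))
      exact hN (i, j) hij (gam_le hnest hle hmemn)
    have := meas_stage_le hnest hmem hrep μ hcyl f₀ n h M (fun j => γ₀ ^ (j : ℕ))
      (fun j => pow_mem hγ₀mem _) hdisj
    exact le_trans (measure_mono (Set.iInter_subset _ n)) this
  by_contra hne0
  obtain ⟨M, hM⟩ := ENNReal.exists_inv_nat_lt hne0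
  exact absurd (key M) (not_le.mpr hM)

lemma T_null_central (hnest : ∀ n, Γ (n + 1) ≤ Γ n) (μ : Measure (∀ n, R n))
    (hcenter : ∀ t : ℝ, (∀ n, Hc t ∈ Γ n) → t = 0)
    (h : H3) (hxy : h.x = 0 ∧ h.y = 0) (hne : h ≠ 1) :
    μ (⋂ n, {ω : ∀ i, R i | (pprodSeq (fun i => ρ i (ω i)) n)⁻¹ * h *
        pprodSeq (fun i => ρ i (ω i)) n ∈ Γ n}) = 0 := by
  obtain ⟨hx, hy⟩ := hxy
  have hnn : ∃ n, h ∉ Γ n := by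
    by_contra hcon
    push_neg at hcon
    have hhc : h = Hc h.z := by ext <;> simp [Hc, hx, hy]
    have : h.z = 0 := hcenter h.z (fun n => hhc ▸ hcon n)
    exact hne (by ext <;> simp [hx, hy, this])
  obtain ⟨n, hn⟩ := hnn
  have hconj : ∀ u : H3, u⁻¹ * h * u = h := by
    intro u; ext <;> simp [hx, hy] <;> ring
  have hempty : {ω : ∀ i, R i | (pprodSeq (fun i => ρ i (ω i)) n)⁻¹ * h *
      pprodSeq (fun i => ρ i (ω i)) n ∈ Γ n} = ∅ := by
    ext ω
    simp only [Set.mem_setOf_eq, Set.mem_empty_iff_false, iff_false]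
    rw [hconj]
    exact hn
  refine le_antisymm ?_ zero_le
  calc μ _ ≤ μ ({ω : ∀ i, R i | (pprodSeq (fun i => ρ i (ω i)) n)⁻¹ * h *
        pprodSeq (fun i => ρ i (ω i)) n ∈ Γ n}) := measure_mono (Set.iInter_subset _ n)
    _ = 0 := by rw [hempty, measure_empty]

end Null
end HOdo
/-- Theorem 3.1 together with Proposition 2.6: for a nested sequence of lattices
`Γ₁ ⊇ Γ₂ ⊇ ⋯` in `H₃(ℝ)` with coset representatives `R n` of `Γ_n/Γ_{n+1}` and the
product `μ` of the uniform measures on `Π_n R_n`, the center meets `⋂ Γ_n` trivially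
if and only if almost every conjugated intersection
`⋂_n γ₁⋯γ_{n-1} Γ_n γ_{n-1}⁻¹⋯γ₁⁻¹` is trivial (essential freeness of the odometer). -/
theorem heisenberg_odometer_free_iff_center_free
    (Γ : ℕ → Subgroup H3) (hlat : ∀ n, IsLattice (Γ n)) (hnest : ∀ n, Γ (n + 1) ≤ Γ n)
    (R : ℕ → Type) [∀ n, Fintype (R n)] [∀ n, MeasurableSpace (R n)]
    [∀ n, DiscreteMeasurableSpace (R n)]
    (ρ : ∀ n, R n → H3)
    (hmem : ∀ n (r : R n), ρ n r ∈ Γ n)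
    (hrep : ∀ n, ∀ γ ∈ Γ n, ∃! r : R n, (ρ n r)⁻¹ * γ ∈ Γ (n + 1))
    (μ : Measure (∀ n, R n)) [IsProbabilityMeasure μ]
    (hcyl : ∀ (n : ℕ) (f : ∀ i, R i),
      μ {ω | ∀ i < n, ω i = f i} =
        ∏ i ∈ Finset.range n, ((Fintype.card (R i) : ENNReal))⁻¹) :
    ({g : H3 | ∃ t : ℝ, g = Hc t} ∩ ⋂ n, (Γ n : Set H3)) = {1}
      ↔
    μ {ω : ∀ n, R n |
        (⋂ n, (fun h => pprodSeq (fun i => ρ i (ω i)) n * h *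
            (pprodSeq (fun i => ρ i (ω i)) n)⁻¹) '' (Γ n : Set H3)) = {1}} = 1 := by
  classical
  haveI hne : Nonempty (∀ n, R n) := by
    by_contra hemp
    rw [not_nonempty_iff] at hemp
    have h1 : μ Set.univ = 1 := measure_univ
    rw [Set.univ_eq_empty_iff.mpr hemp, measure_empty] at h1
    exact zero_ne_one h1
  constructor
  · -- hard direction
    intro ha
    have hcenter : ∀ t : ℝ, (∀ n, Hc t ∈ Γ n) → t = 0 := by
      intro t ht
      have hmem' : Hc t ∈ ({g : H3 | ∃ t : ℝ, g = Hc t} ∩ ⋂ n, (Γ n : Set H3)) :=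
        ⟨⟨t, rfl⟩, Set.mem_iInter.mpr ht⟩
      rw [ha] at hmem'
      have h1 : Hc t = 1 := hmem'
      have := congrArg H3.z h1
      simpa using this
    have hTnull : ∀ h : H3, h ∈ Γ 0 → h ≠ 1 →
        μ (⋂ n, {ω : ∀ i, R i | (pprodSeq (fun i => ρ i (ω i)) n)⁻¹ * h *
          pprodSeq (fun i => ρ i (ω i)) n ∈ Γ n}) = 0 := by
      intro h hh hne1
      by_cases hcent : h.x = 0 ∧ h.y = 0
      · exact HOdo.T_null_central hnest μ hcenter h hcent hne1
      · exact HOdo.T_null_noncentral (hlat 0).2 hnest hmem hrep μ hcyl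
          (Classical.arbitrary _) hcenter h hcent
    haveI : Countable ↥(Γ 0) := HOdo.subgroup_countable (Γ 0) (hlat 0).1
    set Bad : Set (∀ n, R n) := ⋃ γ : ↥(Γ 0),
      (if (γ : H3) = 1 then (∅ : Set (∀ n, R n)) else
        ⋂ n, {ω : ∀ i, R i | (pprodSeq (fun i => ρ i (ω i)) n)⁻¹ * (γ : H3) *
          pprodSeq (fun i => ρ i (ω i)) n ∈ Γ n}) with hBad
    have hBadnull : μ Bad = 0 := by
      refine le_antisymm ?_ zero_le
      calc μ Bad ≤ ∑' γ : ↥(Γ 0), μ (if (γ : H3) = 1 then (∅ : Set (∀ n, R n)) else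
            ⋂ n, {ω : ∀ i, R i | (pprodSeq (fun i => ρ i (ω i)) n)⁻¹ * (γ : H3) *
              pprodSeq (fun i => ρ i (ω i)) n ∈ Γ n}) := measure_iUnion_le _
        _ = 0 := by
          have hz : ∀ γ : ↥(Γ 0), μ (if (γ : H3) = 1 then (∅ : Set (∀ n, R n)) else
              ⋂ n, {ω : ∀ i, R i | (pprodSeq (fun i => ρ i (ω i)) n)⁻¹ * (γ : H3) *
                pprodSeq (fun i => ρ i (ω i)) n ∈ Γ n}) = 0 := by
            intro γ
            split_ifs with h1
            · exact measure_empty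
            · exact hTnull γ γ.2 h1
          rw [tsum_congr hz, tsum_zero]
    set Good := {ω : ∀ n, R n |
        (⋂ n, (fun h => pprodSeq (fun i => ρ i (ω i)) n * h *
            (pprodSeq (fun i => ρ i (ω i)) n)⁻¹) '' (Γ n : Set H3)) = {1}} with hGood
    have hsub : Goodᶜ ⊆ Bad := by
      intro ω hω
      simp only [hGood, Set.mem_compl_iff, Set.mem_setOf_eq] at hω
      have hone : (1 : H3) ∈ ⋂ n, (fun h => pprodSeq (fun i => ρ i (ω i)) n * h *
          (pprodSeq (fun i => ρ i (ω i)) n)⁻¹) '' (Γ n : Set H3) :=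
        Set.mem_iInter.mpr fun n => ⟨1, one_mem _, by group⟩
      have hex : ∃ h, h ∈ (⋂ n, (fun h => pprodSeq (fun i => ρ i (ω i)) n * h *
          (pprodSeq (fun i => ρ i (ω i)) n)⁻¹) '' (Γ n : Set H3)) ∧ h ≠ 1 := by
        by_contra hcon
        push_neg at hcon
        exact hω (Set.eq_singleton_iff_unique_mem.mpr ⟨hone, hcon⟩)
      obtain ⟨h, hmem', hne'⟩ := hex
      have hcond : ∀ n, (pprodSeq (fun i => ρ i (ω i)) n)⁻¹ * h *
          pprodSeq (fun i => ρ i (ω i)) n ∈ Γ n := by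
        intro n
        obtain ⟨γ, hγ, heq⟩ := Set.mem_iInter.mp hmem' n
        have : (pprodSeq (fun i => ρ i (ω i)) n)⁻¹ * h *
            pprodSeq (fun i => ρ i (ω i)) n = γ := by rw [← heq]; group
        rw [this]; exact hγ
      have hh0 : h ∈ Γ 0 := by
        have h0 := hcond 0
        have e : (pprodSeq (fun i => ρ i (ω i)) 0)⁻¹ * h *
            pprodSeq (fun i => ρ i (ω i)) 0 = h := by
          show (1 : H3)⁻¹ * h * 1 = h
          group
        rwa [e] at h0
      refine Set.mem_iUnion.mpr ⟨⟨h, hh0⟩, ?_⟩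
      rw [if_neg hne']
      exact Set.mem_iInter.mpr fun n => hcond n
    have h1 : (1 : ENNReal) ≤ μ Good + μ Bad := by
      calc (1 : ENNReal) = μ Set.univ := measure_univ.symm
        _ ≤ μ (Good ∪ Bad) := measure_mono
            (fun ω _ => (em (ω ∈ Good)).elim Or.inl (fun h => Or.inr (hsub h)))
        _ ≤ μ Good + μ Bad := measure_union_le _ _
    rw [hBadnull, add_zero] at h1
    exact le_antisymm prob_le_one h1
  · -- easy direction
    intro hb
    have hne0 : {ω : ∀ n, R n |
        (⋂ n, (fun h => pprodSeq (fun i => ρ i (ω i)) n * h *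
            (pprodSeq (fun i => ρ i (ω i)) n)⁻¹) '' (Γ n : Set H3)) = {1}}.Nonempty := by
      rw [Set.nonempty_iff_ne_empty]
      intro he
      rw [he, measure_empty] at hb
      exact zero_ne_one hb
    obtain ⟨ω, hω⟩ := hne0
    have hω' : (⋂ n, (fun h => pprodSeq (fun i => ρ i (ω i)) n * h *
        (pprodSeq (fun i => ρ i (ω i)) n)⁻¹) '' (Γ n : Set H3)) = {1} := hω
    apply Set.eq_singleton_iff_unique_mem.mpr
    refine ⟨⟨⟨0, HOdo.Hc_zero.symm⟩, Set.mem_iInter.mpr fun n => one_mem _⟩, ?_⟩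
    rintro g ⟨⟨t, rfl⟩, hgΓ⟩
    have hmem' : Hc t ∈ ⋂ n, (fun h => pprodSeq (fun i => ρ i (ω i)) n * h *
        (pprodSeq (fun i => ρ i (ω i)) n)⁻¹) '' (Γ n : Set H3) :=
      Set.mem_iInter.mpr fun n =>
        ⟨Hc t, Set.mem_iInter.mp hgΓ n, HOdo.central_conj t _⟩
    rw [hω'] at hmem'
    exact hmem'
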